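/- For all π, π' ∈ S_n with the same skeleton and any higher-order twisted stack-sorting operator 𝔰 = ν_m ∘ ⋯ ∘ ν_1 with each ν_j ∈ {s, rev} and ν_1 = s, we have |𝔰⁻¹(π)| = |𝔰⁻¹(π')|. -/

import Mathlib

/-- `l` is a permutation of `{1, …, n}`, written as a word. -/
def IsPermList (n : ℕ) (l : List ℕ) : Prop := l.Perm (List.range' 1 n)

/-- The word obtained from `l` by exchanging the positions of the entries `i` and `i+1`. -/
def swapEntries (i : ℕ) (l : List ℕ) : List ℕ :=
  l.map fun x => if x = i then i + 1 else if x = i + 1 then i else x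

/-- Some entry larger than `i+1` appears (strictly) between the entries `i` and `i+1`
in the word `l`. -/
def ToggleApplies (i : ℕ) (l : List ℕ) : Prop :=
  ∃ a ∈ l, i + 1 < a ∧
    min (l.idxOf i) (l.idxOf (i + 1)) < l.idxOf a ∧
    l.idxOf a < max (l.idxOf i) (l.idxOf (i + 1))

open scoped Classical in
/-- The polyurethane toggle `p i`. -/
noncomputable def toggle (i : ℕ) (l : List ℕ) : List ℕ :=
  if ToggleApplies i l then swapEntries i l else l

lemma max_getD_mem (l : List ℕ) (h : l ≠ []) : l.max?.getD 0 ∈ l := by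
  rcases hm : l.max? with _ | m'
  · exact absurd (List.max?_eq_none_iff.mp hm) h
  · simpa using List.max?_mem hm

lemma length_takeWhile_lt (p : ℕ → Bool) (l : List ℕ) (x : ℕ) (hx : x ∈ l) (hpx : p x = false) :
    (l.takeWhile p).length < l.length := by
  rcases Nat.lt_or_ge (l.takeWhile p).length l.length with h | h
  · exact h
  · have := List.takeWhile_eq_self_iff.mp ((List.takeWhile_sublist p).eq_of_length_le h) x hx
    rw [hpx] at this; exact absurd this (by simp)

lemma length_dropWhile_tail_lt (p : ℕ → Bool) (l : List ℕ) (h : l ≠ []) :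
    ((l.dropWhile p).tail).length < l.length := by
  have h1 : (l.dropWhile p).length ≤ l.length := (List.dropWhile_sublist _).length_le
  have h2 : ((l.dropWhile p).tail).length ≤ (l.dropWhile p).length - 1 := by
    simp [List.length_tail]
  have : 0 < l.length := List.length_pos_iff.mpr h
  omega

/-- West's stack-sorting map `s`: `s([]) = []` and `s(LmR) = s(L) s(R) m`,
where `m` is the largest entry. -/
def stackSort : List ℕ → List ℕ
  | [] => []
  | a :: rest =>
    stackSort ((a :: rest).takeWhile (· ≠ (a :: rest).max?.getD 0)) ++
      stackSort (((a :: rest).dropWhile (· ≠ (a :: rest).max?.getD 0)).tail) ++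
      [(a :: rest).max?.getD 0]
termination_by l => l.length
decreasing_by
  · exact length_takeWhile_lt _ _ _ (max_getD_mem (a :: rest) (by simp)) (by simp)
  · exact length_dropWhile_tail_lt _ _ (by simp)

/-- The inverse of the permutation `l` of `{1, …, n}`, as a word: its `k`-th entry is the
position (1-indexed) of the entry `k` in `l`. -/
def invw (l : List ℕ) : List ℕ := (List.range' 1 l.length).map fun k => l.idxOf k + 1

/-- The composition `l · m` of permutations written as words: `(l · m) j = l (m j)`. -/
def compw (l m : List ℕ) : List ℕ := m.map fun k => l.getD (k - 1) 0

/-- The group element `π⁻¹ · s(π)`, which encodes the skeleton of `π`: two permutations of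
`{1, …, n}` have the same skeleton if and only if their `skel`s coincide. -/
def skel (l : List ℕ) : List ℕ := compw (invw l) (stackSort l)

/-!
A toggle `p i` that applies to `𝔰(σ)` already applies to `σ`, and then `𝔰` commutes with the
value swap `i ↔ i+1`. For `s` this follows from `s(LnR) = s(L) s(R) n`: if `i` and `i+1` lie on
the same side of `n` one recurses, otherwise `s` is order-isomorphic on `L` and on `R`; for `rev`
it is clear, and the property survives composition. So `σ ↦ swapEntries i σ` matches the
preimages of `π` with those of `p i (π)`, and fertility is constant along toggles.

Conversely, permutations with the same skeleton are joined by toggles. The skeleton lists the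
positions of `π` in the order `s` outputs them, i.e. the postorder of the decreasing binary tree
of `π`, and the ancestor relation of that tree (`p` is an ancestor of `q` iff `π(p)` is the
largest value between positions `p` and `q`) can be read off the postorder, hence is shared by
`π` and `π'`. A toggle `p i` that does not apply makes `i+1` an ancestor of `i`. This lets one
place the values `n, n-1, …, 1` one at a time where `π'` has them: the value sitting at the
target position is raised step by step by toggles, each of which applies.
-/

/-! ### Stack-sorting and value swaps -/

lemma stackSort_append_cons {A B : List ℕ} {c : ℕ} (hA : ∀ x ∈ A, x < c)
    (hB : ∀ x ∈ B, x < c) : stackSort (A ++ c :: B) = stackSort A ++ stackSort B ++ [c] := by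
  have hmax : (A ++ c :: B).max? = some c := by
    refine List.max?_eq_some_iff.2 ⟨by simp, fun x hx => ?_⟩
    rcases List.mem_append.1 hx with hx | hx | hx
    exacts [(hA x hx).le, le_rfl, (hB x ‹_›).le]
  have hAc : ∀ x ∈ A, (!decide (x = c)) = true := fun x hx => by simpa using (hA x hx).ne
  obtain ⟨a, l, hl⟩ :=
    List.exists_cons_of_ne_nil (List.append_ne_nil_of_right_ne_nil A (List.cons_ne_nil c B))
  rw [hl, stackSort, ← hl, hmax]
  simp [List.takeWhile_append_of_pos hAc, List.dropWhile_append_of_pos hAc, List.append_assoc]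

lemma exists_eq_append_cons_max {l : List ℕ} (hl : l ≠ []) (hnd : l.Nodup) :
    ∃ A c B, l = A ++ c :: B ∧ (∀ x ∈ A, x < c) ∧ ∀ x ∈ B, x < c := by
  obtain ⟨c, hc⟩ := Option.ne_none_iff_exists'.1 (mt List.max?_eq_none_iff.1 hl)
  obtain ⟨hcl, hle⟩ := List.max?_eq_some_iff.1 hc
  obtain ⟨A, B, rfl⟩ := List.append_of_mem hcl
  have hcA : c ∉ A := (List.disjoint_of_nodup_append hnd · List.mem_cons_self)
  have hcB : c ∉ B := (List.nodup_cons.1 (List.nodup_append.1 hnd).2.1).1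
  refine ⟨A, c, B, rfl, fun x hx => ?_, fun x hx => ?_⟩
  · exact lt_of_le_of_ne (hle x (by simp [hx])) (by rintro rfl; exact hcA hx)
  · exact lt_of_le_of_ne (hle x (by simp [hx])) (by rintro rfl; exact hcB hx)

@[elab_as_elim]
theorem List.Nodup.induction_on_max {motive : List ℕ → Prop} {l : List ℕ} (hl : l.Nodup)
    (nil : motive [])
    (append_cons : ∀ A c B, (∀ x ∈ A, x < c) → (∀ x ∈ B, x < c) → (A ++ c :: B).Nodup →
      motive A → motive B → motive (A ++ c :: B)) : motive l := by
  induction h : l.length using Nat.strong_induction_on generalizing l with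
  | _ N ih =>
  subst h
  rcases eq_or_ne l [] with rfl | hne
  · exact nil
  obtain ⟨A, c, B, rfl, hA, hB⟩ := exists_eq_append_cons_max hne hl
  exact append_cons A c B hA hB hl
    (ih _ (by simp) (hl.sublist (List.sublist_append_left _ _)) rfl)
    (ih _ (by simp; omega)
      (hl.sublist ((List.sublist_cons_self c B).trans (List.sublist_append_right _ _))) rfl)

lemma stackSort_perm {l : List ℕ} (hl : l.Nodup) : (stackSort l).Perm l := by
  refine hl.induction_on_max ?_ ?_
  · simp [stackSort]
  · intro A c B hA hB _ ihA ihB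
    rw [stackSort_append_cons hA hB, List.append_assoc]
    exact ihA.append ((ihB.append_right [c]).trans (List.perm_append_singleton c B))

lemma IsPermList.nodup {n : ℕ} {l : List ℕ} (h : IsPermList n l) : l.Nodup :=
  h.nodup_iff.2 List.nodup_range'

lemma IsPermList.length_eq {n : ℕ} {l : List ℕ} (h : IsPermList n l) : l.length = n := by
  simpa using List.Perm.length_eq h

lemma IsPermList.mem_iff {n : ℕ} {l : List ℕ} (h : IsPermList n l) {x : ℕ} :
    x ∈ l ↔ 1 ≤ x ∧ x ≤ n := by
  rw [List.Perm.mem_iff h, List.mem_range'_1]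
  omega

lemma swapEntries_eq_map (i : ℕ) (l : List ℕ) :
    swapEntries i l = l.map (Equiv.swap i (i + 1)) := by
  unfold swapEntries
  congr 1

@[simp]
lemma swapEntries_swapEntries (i : ℕ) (l : List ℕ) : swapEntries i (swapEntries i l) = l := by
  simp [swapEntries_eq_map, Function.comp_def]

lemma List.idxOf_map_of_injective {α β : Type*} [DecidableEq α] [DecidableEq β] {f : α → β}
    (hf : Function.Injective f) (l : List α) (a : α) : (l.map f).idxOf (f a) = l.idxOf a := by
  induction l with
  | nil => rfl
  | cons b l ih => by_cases h : b = a <;> simp [h, hf.eq_iff, ih]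

lemma idxOf_swapEntries (i : ℕ) (l : List ℕ) (a : ℕ) :
    (swapEntries i l).idxOf (Equiv.swap i (i + 1) a) = l.idxOf a := by
  rw [swapEntries_eq_map]
  exact List.idxOf_map_of_injective (Equiv.injective _) l a

lemma swap_mem_iff {i : ℕ} {l : List ℕ} (hi : i ∈ l) (hi1 : i + 1 ∈ l) {x : ℕ} :
    Equiv.swap i (i + 1) x ∈ l ↔ x ∈ l := by
  rw [Equiv.swap_apply_def]
  split_ifs with h h' <;> simp_all

lemma mem_swapEntries {i : ℕ} {l : List ℕ} (hi : i ∈ l) (hi1 : i + 1 ∈ l) {x : ℕ} :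
    x ∈ swapEntries i l ↔ x ∈ l := by
  rw [swapEntries_eq_map, ← Equiv.swap_apply_self i (i + 1) x,
    List.mem_map_of_injective (Equiv.injective _), Equiv.swap_apply_self, swap_mem_iff hi hi1]

lemma swapEntries_perm {i : ℕ} {l : List ℕ} (hl : l.Nodup) (hi : i ∈ l) (hi1 : i + 1 ∈ l) :
    (swapEntries i l).Perm l :=
  (List.perm_ext_iff_of_nodup (by rw [swapEntries_eq_map]; exact hl.map (Equiv.injective _)) hl).2
    fun _ => mem_swapEntries hi hi1

lemma toggleApplies_swapEntries_iff (i : ℕ) (l : List ℕ) :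
    ToggleApplies i (swapEntries i l) ↔ ToggleApplies i l := by
  suffices ∀ m, ToggleApplies i m → ToggleApplies i (swapEntries i m) from
    ⟨fun h => by simpa using this _ h, this l⟩
  rintro m ⟨a, ham, hia, hlt, hgt⟩
  have ha : Equiv.swap i (i + 1) a = a := Equiv.swap_apply_of_ne_of_ne (by omega) (by omega)
  have h1 := idxOf_swapEntries i m i
  have h2 := idxOf_swapEntries i m (i + 1)
  have h3 := idxOf_swapEntries i m a
  rw [Equiv.swap_apply_left] at h1
  rw [Equiv.swap_apply_right] at h2
  rw [ha] at h3
  refine ⟨a, ?_, hia, ?_, ?_⟩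
  · rw [swapEntries_eq_map, ← ha]; exact List.mem_map_of_mem ham
  · rw [h1, h2, h3, min_comm]; exact hlt
  · rw [h1, h2, h3, max_comm]; exact hgt

lemma toggleApplies_append_left {i : ℕ} {X : List ℕ} (Y : List ℕ) (hi : i ∈ X)
    (hi1 : i + 1 ∈ X) : ToggleApplies i (X ++ Y) ↔ ToggleApplies i X := by
  have hmax : max (X.idxOf i) (X.idxOf (i + 1)) < X.length :=
    max_lt (List.idxOf_lt_length_iff.2 hi) (List.idxOf_lt_length_iff.2 hi1)
  simp only [ToggleApplies, List.idxOf_append_of_mem hi, List.idxOf_append_of_mem hi1]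
  constructor
  · rintro ⟨a, ha, hia, hlt, hgt⟩
    have haX : a ∈ X := by
      by_contra haX
      rw [List.idxOf_append_of_notMem haX] at hgt
      omega
    rw [List.idxOf_append_of_mem haX] at hlt hgt
    exact ⟨a, haX, hia, hlt, hgt⟩
  · rintro ⟨a, ha, hia, hlt, hgt⟩
    exact ⟨a, List.mem_append_left Y ha, hia, by rwa [List.idxOf_append_of_mem ha],
      by rwa [List.idxOf_append_of_mem ha]⟩

lemma toggleApplies_append_right {i : ℕ} {X Y : List ℕ} (hnd : (X ++ Y).Nodup) (hi : i ∈ Y)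
    (hi1 : i + 1 ∈ Y) : ToggleApplies i (X ++ Y) ↔ ToggleApplies i Y := by
  have hY : ∀ a ∈ Y, a ∉ X := fun a haY haX => List.disjoint_of_nodup_append hnd haX haY
  simp only [ToggleApplies, List.idxOf_append_of_notMem (hY i hi),
    List.idxOf_append_of_notMem (hY _ hi1)]
  constructor
  · rintro ⟨a, ha, hia, hlt, hgt⟩
    have haY : a ∈ Y := by
      refine (List.mem_append.1 ha).resolve_left fun haX => ?_
      have := List.idxOf_lt_length_iff.2 haX
      rw [List.idxOf_append_of_mem haX] at hlt
      omega
    rw [List.idxOf_append_of_notMem (hY a haY)] at hlt hgt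
    exact ⟨a, haY, hia, by omega, by omega⟩
  · rintro ⟨a, ha, hia, hlt, hgt⟩
    refine ⟨a, List.mem_append_right X ha, hia, ?_, ?_⟩ <;>
      rw [List.idxOf_append_of_notMem (hY a ha)] <;> omega

lemma idxOf_lt_idxOf_append_cons {A B : List ℕ} {c u v : ℕ} (hu : u ∈ A) (hc : c ∉ A)
    (hv : v ∉ A) (hvc : v ≠ c) :
    (A ++ c :: B).idxOf u < (A ++ c :: B).idxOf c ∧
      (A ++ c :: B).idxOf c < (A ++ c :: B).idxOf v := by
  rw [List.idxOf_append_of_mem hu, List.idxOf_append_of_notMem hc,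
    List.idxOf_append_of_notMem hv, List.idxOf_cons_self, List.idxOf_cons_ne B hvc.symm]
  have := List.idxOf_lt_length_iff.2 hu
  omega

lemma toggleApplies_append_cons {i c : ℕ} {A B : List ℕ} (hnd : (A ++ c :: B).Nodup)
    (hci : i + 1 < c) (h : i ∈ A ∧ i + 1 ∈ B ∨ i + 1 ∈ A ∧ i ∈ B) :
    ToggleApplies i (A ++ c :: B) := by
  have hB : ∀ x ∈ c :: B, x ∉ A := fun x hx hxA => List.disjoint_of_nodup_append hnd hxA hx
  have hcA := hB c List.mem_cons_self
  refine ⟨c, by simp, hci, ?_⟩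
  rcases h with ⟨hu, hv⟩ | ⟨hu, hv⟩ <;>
  · have := idxOf_lt_idxOf_append_cons (B := B) hu hcA (hB _ (List.mem_cons_of_mem c hv))
      (by omega)
    omega

lemma idxOf_reverse {l : List ℕ} (hl : l.Nodup) {v : ℕ} (hv : v ∈ l) :
    l.reverse.idxOf v = l.length - 1 - l.idxOf v := by
  have hk : l.idxOf v < l.length := List.idxOf_lt_length_iff.2 hv
  have hj : l.length - 1 - l.idxOf v < l.reverse.length := by
    rw [List.length_reverse]
    omega
  have hget : l.reverse[l.length - 1 - l.idxOf v] = v := by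
    rw [List.getElem_reverse]
    simp only [show l.length - 1 - (l.length - 1 - l.idxOf v) = l.idxOf v by omega]
    exact List.getElem_idxOf hk
  conv_lhs => rw [← hget]
  exact (List.nodup_reverse.2 hl).idxOf_getElem _ hj

lemma toggleApplies_reverse {i : ℕ} {l : List ℕ} (hl : l.Nodup) (hi : i ∈ l) (hi1 : i + 1 ∈ l) :
    ToggleApplies i l.reverse ↔ ToggleApplies i l := by
  have hpi := List.idxOf_lt_length_iff.2 hi
  have hpi1 := List.idxOf_lt_length_iff.2 hi1
  simp only [ToggleApplies, List.mem_reverse]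
  refine exists_congr fun a => and_congr_right fun ha => and_congr_right fun _ => ?_
  have hpa := List.idxOf_lt_length_iff.2 ha
  rw [idxOf_reverse hl ha, idxOf_reverse hl hi, idxOf_reverse hl hi1]
  omega

lemma stackSort_map_of_strictMonoOn {f : ℕ → ℕ} {l : List ℕ} (hl : l.Nodup)
    (hf : StrictMonoOn f {x | x ∈ l}) : stackSort (l.map f) = (stackSort l).map f := by
  revert hf
  refine hl.induction_on_max ?_ ?_
  · simp [stackSort]
  · intro A c B hA hB _ ihA ihB hf
    have hf_lt : ∀ X : List ℕ, (∀ x ∈ X, x ∈ A ++ c :: B) → (∀ x ∈ X, x < c) →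
        ∀ y ∈ X.map f, y < f c := by
      simp only [List.mem_map]
      rintro X hX hXc _ ⟨x, hx, rfl⟩
      exact hf (hX x hx) (by simp) (hXc x hx)
    rw [List.map_append, List.map_cons,
      stackSort_append_cons (hf_lt A (by simp_all) hA) (hf_lt B (by simp_all) hB),
      stackSort_append_cons hA hB, ihA (hf.mono fun x hx => List.mem_append_left _ hx),
      ihB (hf.mono fun x hx => List.mem_append_right _ (List.mem_cons_of_mem c hx))]
    simp

lemma strictMonoOn_swap {i : ℕ} {l : List ℕ} (h : i ∉ l ∨ i + 1 ∉ l) :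
    StrictMonoOn (Equiv.swap i (i + 1)) {x | x ∈ l} := by
  intro x hx y hy hxy
  simp only [Equiv.swap_apply_def]
  rcases h with h | h <;> split_ifs <;> simp_all <;> omega

lemma stackSort_swapEntries_of_notMem {i : ℕ} {l : List ℕ} (hl : l.Nodup)
    (h : i ∉ l ∨ i + 1 ∉ l) : stackSort (swapEntries i l) = swapEntries i (stackSort l) := by
  simpa only [swapEntries_eq_map] using stackSort_map_of_strictMonoOn hl (strictMonoOn_swap h)

lemma forall_mem_swapEntries_lt {i c : ℕ} {l : List ℕ} (hic : i + 1 < c)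
    (hl : ∀ x ∈ l, x < c) : ∀ x ∈ swapEntries i l, x < c := by
  simp only [swapEntries_eq_map, List.mem_map]
  rintro _ ⟨x, hx, rfl⟩
  have := hl x hx
  rw [Equiv.swap_apply_def]
  split_ifs <;> omega

lemma stackSort_swapEntries {i : ℕ} {l : List ℕ} (hl : l.Nodup) (h : ToggleApplies i l) :
    stackSort (swapEntries i l) = swapEntries i (stackSort l) := by
  revert h
  refine hl.induction_on_max ?_ ?_
  · rintro ⟨a, ha, -⟩
    simp at ha
  · intro A c B hA hB hnd ihA ihB h
    obtain ⟨hndA, hndcB, -⟩ := List.nodup_append.1 hnd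
    have hic : i + 1 < c := by
      obtain ⟨a, ha, hia, -⟩ := h
      rcases List.mem_append.1 ha with ha | ha | ha
      exacts [(hia.trans (hA a ha)), hia, hia.trans (hB a ‹_›)]
    have hsA : stackSort (swapEntries i A) = swapEntries i (stackSort A) := by
      by_cases hiA : i ∈ A ∧ i + 1 ∈ A
      · exact ihA ((toggleApplies_append_left _ hiA.1 hiA.2).1 h)
      · exact stackSort_swapEntries_of_notMem hndA (not_and_or.1 hiA)
    have hsB : stackSort (swapEntries i B) = swapEntries i (stackSort B) := by
      by_cases hiB : i ∈ B ∧ i + 1 ∈ B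
      · rw [List.append_cons] at h hnd
        exact ihB ((toggleApplies_append_right hnd hiB.1 hiB.2).1 h)
      · exact stackSort_swapEntries_of_notMem hndcB.of_cons (not_and_or.1 hiB)
    have hsc : Equiv.swap i (i + 1) c = c := Equiv.swap_apply_of_ne_of_ne (by omega) (by omega)
    have hsplit : swapEntries i (A ++ c :: B) = swapEntries i A ++ c :: swapEntries i B := by
      simp [swapEntries_eq_map, hsc]
    rw [hsplit, stackSort_append_cons (forall_mem_swapEntries_lt hic hA)
      (forall_mem_swapEntries_lt hic hB), stackSort_append_cons hA hB, hsA, hsB]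
    simp [swapEntries_eq_map, hsc]

lemma toggleApplies_of_toggleApplies_stackSort {i : ℕ} {l : List ℕ} (hl : l.Nodup) (hi : i ∈ l)
    (hi1 : i + 1 ∈ l) (h : ToggleApplies i (stackSort l)) : ToggleApplies i l := by
  revert hi hi1 h
  refine hl.induction_on_max ?_ ?_
  · simp
  · intro A c B hA hB hnd ihA ihB hi hi1 h
    have hpA := stackSort_perm (List.nodup_append.1 hnd).1
    have hpB := stackSort_perm (List.nodup_append.1 hnd).2.1.of_cons
    have hndS : (stackSort A ++ (stackSort B ++ [c])).Nodup := by
      rw [← List.append_assoc, ← stackSort_append_cons hA hB]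
      exact (stackSort_perm hnd).nodup_iff.2 hnd
    rw [stackSort_append_cons hA hB, List.append_assoc] at h
    have hic : i + 1 < c := by
      obtain ⟨a, ha, hia, -⟩ := h
      simp only [List.mem_append, hpA.mem_iff, hpB.mem_iff, List.mem_singleton] at ha
      rcases ha with ha | ha | rfl
      exacts [(hia.trans (hA a ha)), hia.trans (hB a ha), hia]
    have hmem : ∀ x ∈ A ++ c :: B, x < c → x ∈ A ∨ x ∈ B := by
      intro x hx hxc
      rcases List.mem_append.1 hx with hx | hx | hx
      exacts [Or.inl hx, absurd hxc (lt_irrefl c), Or.inr ‹_›]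
    rcases hmem i hi (by omega) with hiA | hiB <;> rcases hmem (i + 1) hi1 hic with hi1A | hi1B
    · have hA' := (toggleApplies_append_left _ (hpA.mem_iff.2 hiA) (hpA.mem_iff.2 hi1A)).1 h
      exact (toggleApplies_append_left _ hiA hi1A).2 (ihA hiA hi1A hA')
    · exact toggleApplies_append_cons hnd hic (Or.inl ⟨hiA, hi1B⟩)
    · exact toggleApplies_append_cons hnd hic (Or.inr ⟨hi1A, hiB⟩)
    · have hsB := (toggleApplies_append_right hndS (List.mem_append_left _ (hpB.mem_iff.2 hiB))
        (List.mem_append_left _ (hpB.mem_iff.2 hi1B))).1 h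
      have hB' := (toggleApplies_append_left _ (hpB.mem_iff.2 hiB) (hpB.mem_iff.2 hi1B)).1 hsB
      rw [List.append_cons] at hnd ⊢
      exact (toggleApplies_append_right hnd hiB hi1B).2 (ihB hiB hi1B hB')

/-! ### Fertility along toggles -/

structure ToggleCompatible (g : List ℕ → List ℕ) : Prop where
  perm {l : List ℕ} : l.Nodup → (g l).Perm l
  toggleApplies_of_apply {i : ℕ} {l : List ℕ} : l.Nodup → i ∈ l → i + 1 ∈ l →
    ToggleApplies i (g l) → ToggleApplies i l
  map_swapEntries {i : ℕ} {l : List ℕ} : l.Nodup → i ∈ l → i + 1 ∈ l →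
    ToggleApplies i (g l) → g (swapEntries i l) = swapEntries i (g l)

lemma toggleCompatible_stackSort : ToggleCompatible stackSort where
  perm := stackSort_perm
  toggleApplies_of_apply := toggleApplies_of_toggleApplies_stackSort
  map_swapEntries hl hi hi1 h :=
    stackSort_swapEntries hl (toggleApplies_of_toggleApplies_stackSort hl hi hi1 h)

lemma toggleCompatible_reverse : ToggleCompatible List.reverse where
  perm _ := List.reverse_perm _
  toggleApplies_of_apply hl hi hi1 h := (toggleApplies_reverse hl hi hi1).1 h
  map_swapEntries _ _ _ _ := by simp [swapEntries_eq_map]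

lemma ToggleCompatible.comp {g f : List ℕ → List ℕ} (hg : ToggleCompatible g)
    (hf : ToggleCompatible f) : ToggleCompatible (g ∘ f) where
  perm hl := (hg.perm ((hf.perm hl).nodup_iff.2 hl)).trans (hf.perm hl)
  toggleApplies_of_apply hl hi hi1 h := by
    have hp := hf.perm hl
    exact hf.toggleApplies_of_apply hl hi hi1 (hg.toggleApplies_of_apply
      (hp.nodup_iff.2 hl) (hp.mem_iff.2 hi) (hp.mem_iff.2 hi1) h)
  map_swapEntries hl hi hi1 h := by
    have hp := hf.perm hl
    have hfi :=
      hg.toggleApplies_of_apply (hp.nodup_iff.2 hl) (hp.mem_iff.2 hi) (hp.mem_iff.2 hi1) h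
    simp only [Function.comp_apply]
    rw [hf.map_swapEntries hl hi hi1 hfi,
      hg.map_swapEntries (hp.nodup_iff.2 hl) (hp.mem_iff.2 hi) (hp.mem_iff.2 hi1) h]

lemma toggleCompatible_foldr_comp {f : List ℕ → List ℕ} (hf : ToggleCompatible f)
    {gs : List (List ℕ → List ℕ)} (hgs : ∀ g ∈ gs, ToggleCompatible g) :
    ToggleCompatible (gs.foldr (· ∘ ·) f) := by
  induction gs with
  | nil => exact hf
  | cons g gs ih =>
    exact (hgs g List.mem_cons_self).comp (ih fun g' hg' => hgs g' (List.mem_cons_of_mem g hg'))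

lemma ToggleCompatible.isPermList_swapEntries_and_apply {F : List ℕ → List ℕ}
    (hF : ToggleCompatible F) {n i : ℕ} {σ : List ℕ} (hσ : IsPermList n σ) (hi : i ∈ F σ)
    (hi1 : i + 1 ∈ F σ) (h : ToggleApplies i (F σ)) :
    IsPermList n (swapEntries i σ) ∧ F (swapEntries i σ) = swapEntries i (F σ) := by
  have hp := hF.perm hσ.nodup
  exact ⟨(swapEntries_perm hσ.nodup (hp.mem_iff.1 hi) (hp.mem_iff.1 hi1)).trans hσ,
    hF.map_swapEntries hσ.nodup (hp.mem_iff.1 hi) (hp.mem_iff.1 hi1) h⟩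

lemma card_preimage_swapEntries {F : List ℕ → List ℕ} (hF : ToggleCompatible F) {n i : ℕ}
    {a : List ℕ} (hi : i ∈ a) (hi1 : i + 1 ∈ a) (ha : ToggleApplies i a) :
    Nat.card {σ : List ℕ // IsPermList n σ ∧ F σ = a} =
      Nat.card {σ : List ℕ // IsPermList n σ ∧ F σ = swapEntries i a} := by
  refine Nat.card_congr (Equiv.subtypeEquiv
    (Function.Involutive.toPerm _ (swapEntries_swapEntries i)) fun σ => ⟨?_, ?_⟩)
  · rintro ⟨hσ, rfl⟩
    exact hF.isPermList_swapEntries_and_apply hσ hi hi1 ha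
  · intro h
    obtain ⟨hσ, hFσ⟩ : IsPermList n (swapEntries i σ) ∧ F (swapEntries i σ) = swapEntries i a := h
    have hi' : i ∈ F (swapEntries i σ) := by rw [hFσ, mem_swapEntries hi hi1]; exact hi
    have hi1' : i + 1 ∈ F (swapEntries i σ) := by rw [hFσ, mem_swapEntries hi hi1]; exact hi1
    have ha' : ToggleApplies i (F (swapEntries i σ)) := by
      rwa [hFσ, toggleApplies_swapEntries_iff]
    simpa [hFσ] using hF.isPermList_swapEntries_and_apply hσ hi' hi1' ha'

def ToggleStep (a b : List ℕ) : Prop := ∃ i, i ∈ a ∧ i + 1 ∈ a ∧ b = toggle i a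

lemma card_preimage_eq_of_reflTransGen {F : List ℕ → List ℕ} (hF : ToggleCompatible F) {n : ℕ}
    {a b : List ℕ} (h : Relation.ReflTransGen ToggleStep a b) :
    Nat.card {σ : List ℕ // IsPermList n σ ∧ F σ = a} =
      Nat.card {σ : List ℕ // IsPermList n σ ∧ F σ = b} := by
  induction h with
  | refl => rfl
  | tail _ hbc ih =>
    obtain ⟨i, hi, hi1, rfl⟩ := hbc
    rw [ih, toggle]
    split_ifs with h
    exacts [card_preimage_swapEntries hF hi hi1 h, rfl]

/-! ### The skeleton and the decreasing binary tree -/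

/-- The postorder of the decreasing binary tree of `l`, as 0-based positions in `l`. -/
def outputPositions (l : List ℕ) : List ℕ := (stackSort l).map l.idxOf

def outputTime (l : List ℕ) (p : ℕ) : ℕ := (outputPositions l).idxOf p

lemma map_idxOf_self {l : List ℕ} (hl : l.Nodup) : l.map l.idxOf = List.range l.length :=
  List.ext_getElem (by simp) fun r h _ => by simpa using hl.idxOf_getElem r (by simpa using h)

lemma outputPositions_perm {l : List ℕ} (hl : l.Nodup) :
    (outputPositions l).Perm (List.range l.length) := by
  simpa [outputPositions, map_idxOf_self hl] using (stackSort_perm hl).map l.idxOf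

lemma outputTime_lt {l : List ℕ} (hl : l.Nodup) {p : ℕ} (hp : p < l.length) :
    outputTime l p < l.length := by
  have hperm := outputPositions_perm hl
  rw [outputTime, ← List.length_range (n := l.length), ← hperm.length_eq]
  exact List.idxOf_lt_length_iff.2 (hperm.mem_iff.2 (List.mem_range.2 hp))

lemma outputPositions_append_cons {A B : List ℕ} {c : ℕ} (hA : ∀ x ∈ A, x < c)
    (hB : ∀ x ∈ B, x < c) (hnd : (A ++ c :: B).Nodup) :
    outputPositions (A ++ c :: B) =
      outputPositions A ++ (outputPositions B).map (· + (A.length + 1)) ++ [A.length] := by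
  obtain ⟨hndA, hndcB, hdisj⟩ := List.nodup_append.1 hnd
  have hcA : c ∉ A := fun h => hdisj c h c List.mem_cons_self rfl
  rw [outputPositions, stackSort_append_cons hA hB, List.map_append, List.map_append,
    outputPositions, outputPositions, List.map_map]
  congr 2
  · refine List.map_congr_left fun v hv => ?_
    exact List.idxOf_append_of_mem ((stackSort_perm hndA).mem_iff.1 hv)
  · refine List.map_congr_left fun v hv => ?_
    have hvB := (stackSort_perm hndcB.of_cons).mem_iff.1 hv
    have hvA : v ∉ A := fun h => hdisj v h v (List.mem_cons_of_mem c hvB) rfl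
    have hcv : c ≠ v := fun h => (List.nodup_cons.1 hndcB).1 (h ▸ hvB)
    simp [List.idxOf_append_of_notMem hvA, List.idxOf_cons_ne B hcv]
    omega
  · simp [List.idxOf_append_of_notMem hcA]

lemma outputTime_append_cons_of_lt {A B : List ℕ} {c : ℕ} (hA : ∀ x ∈ A, x < c)
    (hB : ∀ x ∈ B, x < c) (hnd : (A ++ c :: B).Nodup) {p : ℕ} (hp : p < A.length) :
    outputTime (A ++ c :: B) p = outputTime A p := by
  have hpA := (outputPositions_perm (List.nodup_append.1 hnd).1).mem_iff.2 (List.mem_range.2 hp)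
  rw [outputTime, outputPositions_append_cons hA hB hnd, List.append_assoc,
    List.idxOf_append_of_mem hpA, outputTime]

lemma outputTime_append_cons_length {A B : List ℕ} {c : ℕ} (hA : ∀ x ∈ A, x < c)
    (hB : ∀ x ∈ B, x < c) (hnd : (A ++ c :: B).Nodup) :
    outputTime (A ++ c :: B) A.length = A.length + B.length := by
  have hpA := outputPositions_perm (List.nodup_append.1 hnd).1
  have hpB := outputPositions_perm (List.nodup_append.1 hnd).2.1.of_cons
  have h1 : A.length ∉ outputPositions A := fun h => by simpa using hpA.mem_iff.1 h
  have h2 : A.length ∉ (outputPositions B).map (· + (A.length + 1)) := by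
    simp only [List.mem_map, not_exists, not_and]
    omega
  rw [outputTime, outputPositions_append_cons hA hB hnd,
    List.idxOf_append_of_notMem (by simp [h1, h2])]
  simp [hpA.length_eq, hpB.length_eq]

lemma outputTime_append_cons_add {A B : List ℕ} {c : ℕ} (hA : ∀ x ∈ A, x < c)
    (hB : ∀ x ∈ B, x < c) (hnd : (A ++ c :: B).Nodup) {q : ℕ} (hq : q < B.length) :
    outputTime (A ++ c :: B) (A.length + 1 + q) = A.length + outputTime B q := by
  have hndA := (List.nodup_append.1 hnd).1
  have hndB := (List.nodup_append.1 hnd).2.1.of_cons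
  have h1 : A.length + 1 + q ∉ outputPositions A := fun h => by
    have := (outputPositions_perm hndA).mem_iff.1 h
    simp at this
    omega
  have h2 : q ∈ outputPositions B := (outputPositions_perm hndB).mem_iff.2 (List.mem_range.2 hq)
  have h3 := List.idxOf_map_of_injective (add_left_injective (A.length + 1)) (outputPositions B) q
  rw [outputTime, outputPositions_append_cons hA hB hnd, List.append_assoc,
    List.idxOf_append_of_notMem h1, show A.length + 1 + q = q + (A.length + 1) by omega,
    List.idxOf_append_of_mem (List.mem_map_of_mem (f := (· + (A.length + 1))) h2), h3,
    (outputPositions_perm hndA).length_eq, List.length_range, outputTime]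

/-- For `f = (l.getD · 0)`, position `p` is an ancestor of position `q` in the decreasing
binary tree of `l`. -/
def IsMaxBetween (f : ℕ → ℕ) (n p q : ℕ) : Prop :=
  p < n ∧ q < n ∧ ∀ r, min p q ≤ r → r ≤ max p q → f r ≤ f p

lemma isMaxBetween_congr {f g : ℕ → ℕ} {n : ℕ} (h : ∀ r < n, f r = g r) {p q : ℕ} :
    IsMaxBetween f n p q ↔ IsMaxBetween g n p q := by
  refine and_congr_right fun hp => and_congr_right fun hq =>
    forall_congr' fun r => imp_congr_right fun h1 => imp_congr_right fun h2 => ?_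
  rw [h r (by omega), h p hp]

lemma isMaxBetween_comp {f h : ℕ → ℕ} (hh : StrictMono h) {n p q : ℕ} :
    IsMaxBetween (fun r => h (f r)) n p q ↔ IsMaxBetween f n p q := by
  simp only [IsMaxBetween, hh.le_iff_le]

lemma isMaxBetween_add_one_add_iff {f : ℕ → ℕ} {a b : ℕ}
    (hf : ∀ r < a + 1 + b, r ≠ a → f r < f a) {p q : ℕ} :
    IsMaxBetween f (a + 1 + b) p q ↔ IsMaxBetween f a p q ∨ (p = a ∧ q < a + 1 + b) ∨
      ∃ p' q', p = a + 1 + p' ∧ q = a + 1 + q' ∧ IsMaxBetween (fun r => f (a + 1 + r)) b p' q' := by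
  constructor
  · rintro ⟨hp, hq, h⟩
    rcases lt_trichotomy p a with hpa | rfl | hpa
    · have hqa : q < a := by
        by_contra hqa
        have := hf p hp hpa.ne
        have := h a (by omega) (by omega)
        omega
      exact Or.inl ⟨hpa, hqa, h⟩
    · exact Or.inr (Or.inl ⟨rfl, hq⟩)
    · have hqa : a < q := by
        by_contra hqa
        have := hf p hp hpa.ne'
        have := h a (by omega) (by omega)
        omega
      refine Or.inr (Or.inr ⟨p - (a + 1), q - (a + 1), by omega, by omega, by omega, by omega,
        fun r h1 h2 => ?_⟩)
      have := h (a + 1 + r) (by omega) (by omega)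
      dsimp only
      rwa [show a + 1 + (p - (a + 1)) = p by omega]
  · rintro (⟨hp, hq, h⟩ | ⟨rfl, hq⟩ | ⟨p', q', rfl, rfl, hp, hq, h⟩)
    · exact ⟨by omega, by omega, h⟩
    · refine ⟨by omega, hq, fun r h1 h2 => ?_⟩
      rcases eq_or_ne r p with rfl | hr
      exacts [le_rfl, (hf r (by omega) hr).le]
    · refine ⟨by omega, by omega, fun r h1 h2 => ?_⟩
      have := h (r - (a + 1)) (by omega) (by omega)
      dsimp only at this
      rwa [show a + 1 + (r - (a + 1)) = r by omega] at this

lemma lt_or_exists_eq_add_of_ne {a b r : ℕ} (hr : r < a + 1 + b) (hra : r ≠ a) :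
    r < a ∨ ∃ r' < b, r = a + 1 + r' := by
  rcases lt_or_gt_of_ne hra with h | h
  exacts [Or.inl h, Or.inr ⟨r - (a + 1), by omega, by omega⟩]

theorem isMaxBetween_getD_iff_outputTime {l : List ℕ} (hl : l.Nodup) {p q : ℕ} :
    IsMaxBetween (l.getD · 0) l.length p q ↔ IsMaxBetween (outputTime l) l.length p q := by
  refine hl.induction_on_max (motive := fun l => ∀ p q, IsMaxBetween (l.getD · 0) l.length p q ↔
    IsMaxBetween (outputTime l) l.length p q) ?_ ?_ p q
  · simp [IsMaxBetween]
  · intro A c B hA hB hnd ihA ihB p q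
    have hndA := (List.nodup_append.1 hnd).1
    have hndB := (List.nodup_append.1 hnd).2.1.of_cons
    have hlen : (A ++ c :: B).length = A.length + 1 + B.length := by simp; omega
    have hgetD_lt : ∀ r < A.length, (A ++ c :: B).getD r 0 = A.getD r 0 :=
      fun r hr => List.getD_append _ _ _ _ hr
    have hgetD_add : ∀ r, (A ++ c :: B).getD (A.length + 1 + r) 0 = B.getD r 0 := fun r => by
      rw [List.getD_append_right _ _ _ _ (by omega),
        show A.length + 1 + r - A.length = r + 1 by omega, List.getD_cons_succ]
    have hval : ∀ r < A.length + 1 + B.length, r ≠ A.length →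
        (A ++ c :: B).getD r 0 < (A ++ c :: B).getD A.length 0 := by
      intro r hr hra
      rw [List.getD_append_right _ _ _ _ le_rfl, Nat.sub_self, List.getD_cons_zero]
      rcases lt_or_exists_eq_add_of_ne hr hra with hr | ⟨r, hr', rfl⟩
      · rw [hgetD_lt r hr, List.getD_eq_getElem _ _ hr]
        exact hA _ (List.getElem_mem hr)
      · rw [hgetD_add, List.getD_eq_getElem _ _ hr']
        exact hB _ (List.getElem_mem hr')
    have htime : ∀ r < A.length + 1 + B.length, r ≠ A.length →
        outputTime (A ++ c :: B) r < outputTime (A ++ c :: B) A.length := by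
      intro r hr hra
      rw [outputTime_append_cons_length hA hB hnd]
      rcases lt_or_exists_eq_add_of_ne hr hra with hr | ⟨r, hr', rfl⟩
      · rw [outputTime_append_cons_of_lt hA hB hnd hr]
        have := outputTime_lt hndA hr
        omega
      · rw [outputTime_append_cons_add hA hB hnd hr']
        have := outputTime_lt hndB hr'
        omega
    rw [hlen, isMaxBetween_add_one_add_iff hval, isMaxBetween_add_one_add_iff htime]
    refine or_congr ?_ (or_congr Iff.rfl (exists₂_congr fun p' q' =>
      and_congr_right fun _ => and_congr_right fun _ => ?_))
    · rw [isMaxBetween_congr hgetD_lt, ihA,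
        isMaxBetween_congr fun r hr => outputTime_append_cons_of_lt hA hB hnd hr]
    · rw [isMaxBetween_congr fun r _ => hgetD_add r, ihB,
        ← isMaxBetween_comp (add_right_strictMono (a := A.length)),
        isMaxBetween_congr fun r hr => outputTime_append_cons_add hA hB hnd hr]

lemma skel_eq_map_outputPositions {n : ℕ} {l : List ℕ} (hl : IsPermList n l) :
    skel l = (outputPositions l).map (· + 1) := by
  rw [skel, compw, outputPositions, List.map_map]
  refine List.map_congr_left fun k hk => ?_
  have hk1 := hl.mem_iff.1 ((stackSort_perm hl.nodup).mem_iff.1 hk)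
  have hkn : k - 1 < l.length := by rw [hl.length_eq]; omega
  simp [invw, hkn, show 1 + (k - 1) = k by omega]

lemma outputPositions_eq_of_skel_eq {n : ℕ} {l l' : List ℕ} (hl : IsPermList n l)
    (hl' : IsPermList n l') (h : skel l = skel l') : outputPositions l = outputPositions l' := by
  rw [skel_eq_map_outputPositions hl, skel_eq_map_outputPositions hl'] at h
  exact List.map_injective_iff.2 (add_left_injective 1) h

lemma outputPositions_swapEntries {i : ℕ} {l : List ℕ} (hl : l.Nodup) (h : ToggleApplies i l) :
    outputPositions (swapEntries i l) = outputPositions l := by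
  rw [outputPositions, outputPositions, stackSort_swapEntries hl h]
  simp only [swapEntries_eq_map, List.map_map]
  exact List.map_congr_left fun v _ => List.idxOf_map_of_injective (Equiv.injective _) l v

lemma getD_idxOf {l : List ℕ} {v : ℕ} (hv : v ∈ l) : l.getD (l.idxOf v) 0 = v := by
  rw [List.getD_eq_getElem _ _ (List.idxOf_lt_length_iff.2 hv), List.getElem_idxOf]

lemma getD_mem {l : List ℕ} {r : ℕ} (hr : r < l.length) : l.getD r 0 ∈ l := by
  rw [List.getD_eq_getElem _ _ hr]
  exact List.getElem_mem hr

lemma idxOf_getD {l : List ℕ} (hl : l.Nodup) {r : ℕ} (hr : r < l.length) :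
    l.idxOf (l.getD r 0) = r := by
  rw [List.getD_eq_getElem _ _ hr, hl.idxOf_getElem]

lemma isMaxBetween_of_not_toggleApplies {i : ℕ} {l : List ℕ} (hl : l.Nodup) (hi : i ∈ l)
    (hi1 : i + 1 ∈ l) (h : ¬ToggleApplies i l) :
    IsMaxBetween (l.getD · 0) l.length (l.idxOf (i + 1)) (l.idxOf i) := by
  refine ⟨List.idxOf_lt_length_iff.2 hi1, List.idxOf_lt_length_iff.2 hi, fun r h1 h2 => ?_⟩
  have hr : r < l.length := by
    have := List.idxOf_lt_length_iff.2 hi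
    have := List.idxOf_lt_length_iff.2 hi1
    omega
  dsimp only
  rw [getD_idxOf hi1]
  by_contra hlt
  have hri : r ≠ l.idxOf i := fun e => by rw [e, getD_idxOf hi] at hlt; omega
  have hri1 : r ≠ l.idxOf (i + 1) := fun e => by rw [e, getD_idxOf hi1] at hlt; omega
  exact h ⟨l.getD r 0, getD_mem hr, by omega, by rw [idxOf_getD hl hr]; omega,
    by rw [idxOf_getD hl hr]; omega⟩

/-! ### Permutations with equal skeletons are joined by toggles -/

def AgreeAbove (k : ℕ) (l l' : List ℕ) : Prop := ∀ v, k < v → l.idxOf v = l'.idxOf v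

lemma agreeAbove_of_isPermList {n : ℕ} {l l' : List ℕ} (hl : IsPermList n l)
    (hl' : IsPermList n l') : AgreeAbove n l l' := by
  intro v hv
  rw [List.idxOf_eq_length (by rw [hl.mem_iff]; omega),
    List.idxOf_eq_length (by rw [hl'.mem_iff]; omega), hl.length_eq, hl'.length_eq]

lemma eq_of_agreeAbove_zero {n : ℕ} {l l' : List ℕ} (hl : IsPermList n l)
    (hl' : IsPermList n l') (h : AgreeAbove 0 l l') : l = l' := by
  refine List.ext_getElem (by rw [hl.length_eq, hl'.length_eq]) fun r h1 h2 => ?_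
  have hv := hl.mem_iff.1 (List.getElem_mem h1)
  have e := h l[r] (by omega)
  rw [hl.nodup.idxOf_getElem] at e
  have := List.getElem_idxOf (List.idxOf_lt_length_iff.2 (hl'.mem_iff.2 hv))
  simp only [← e] at this
  exact this.symm

lemma toggleApplies_of_agreeAbove {n m j : ℕ} {l l' : List ℕ} (hl : IsPermList n l)
    (hl' : IsPermList n l') (hw : outputPositions l = outputPositions l')
    (hag : AgreeAbove m l l') (hj : l.idxOf j = l'.idxOf m) (hj1 : 1 ≤ j) (hjm : j < m)
    (hm : m ≤ n) : ToggleApplies j l := by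
  by_contra h
  have hjl : j ∈ l := hl.mem_iff.2 ⟨hj1, by omega⟩
  have hj1l : j + 1 ∈ l := hl.mem_iff.2 ⟨by omega, by omega⟩
  have hml' : m ∈ l' := hl'.mem_iff.2 ⟨by omega, hm⟩
  have hmax := isMaxBetween_of_not_toggleApplies hl.nodup hjl hj1l h
  have hlen : l.length = l'.length := by rw [hl.length_eq, hl'.length_eq]
  have htime : outputTime l = outputTime l' := by
    unfold outputTime
    rw [hw]
  rw [isMaxBetween_getD_iff_outputTime hl.nodup, htime, hlen,
    ← isMaxBetween_getD_iff_outputTime hl'.nodup, hj] at hmax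
  have hle := hmax.2.2 _ (min_le_right _ _) (le_max_right _ _)
  simp only [getD_idxOf hml'] at hle
  set v := l'.getD (l.idxOf (j + 1)) 0
  have hvl' : v ∈ l' := getD_mem hmax.1
  have hv : l'.idxOf v = l.idxOf (j + 1) := idxOf_getD hl'.nodup hmax.1
  have hvm : v ≠ m := fun e => by
    rw [e, ← hj, List.idxOf_inj hjl] at hv
    omega
  have := hag v (by omega)
  rw [hv, List.idxOf_inj (hl.mem_iff.2 (hl'.mem_iff.1 hvl'))] at this
  omega

lemma reflTransGen_toggleStep_of_agreeAbove_succ {n k : ℕ} {l' : List ℕ}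
    (hl' : IsPermList n l') (hk : k + 1 ≤ n)
    (ih : ∀ l, IsPermList n l → outputPositions l = outputPositions l' → AgreeAbove k l l' →
      Relation.ReflTransGen ToggleStep l l')
    {j : ℕ} {l : List ℕ} (hl : IsPermList n l) (hw : outputPositions l = outputPositions l')
    (hag : AgreeAbove (k + 1) l l') (hj : l.idxOf j = l'.idxOf (k + 1)) (hj1 : 1 ≤ j)
    (hjk : j ≤ k + 1) : Relation.ReflTransGen ToggleStep l l' := by
  induction hd : k + 1 - j generalizing j l with
  | zero =>
    obtain rfl : j = k + 1 := by omega
    refine ih l hl hw fun v hv => ?_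
    rcases Nat.lt_or_ge (k + 1) v with hv' | hv'
    · exact hag v hv'
    · obtain rfl : v = k + 1 := by omega
      exact hj
  | succ d ihd =>
    have ht := toggleApplies_of_agreeAbove hl hl' hw hag hj hj1 (by omega) hk
    have hjl : j ∈ l := hl.mem_iff.2 ⟨hj1, by omega⟩
    have hj1l : j + 1 ∈ l := hl.mem_iff.2 ⟨by omega, by omega⟩
    have hidx := idxOf_swapEntries j l
    refine Relation.ReflTransGen.head ⟨j, hjl, hj1l, by rw [toggle, if_pos ht]⟩
      (ihd (j := j + 1) ((swapEntries_perm hl.nodup hjl hj1l).trans hl)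
        ((outputPositions_swapEntries hl.nodup ht).trans hw) (fun v hv => ?_) ?_
        (by omega) (by omega) (by omega))
    · rw [← hag v hv, ← hidx v, Equiv.swap_apply_of_ne_of_ne (by omega) (by omega)]
    · rw [← hj, ← hidx j, Equiv.swap_apply_left]

lemma exists_idxOf_eq {n : ℕ} {l l' : List ℕ} (hl : IsPermList n l) (hl' : IsPermList n l')
    {v : ℕ} (hv : v ∈ l') : ∃ j ∈ l, l.idxOf j = l'.idxOf v := by
  have hx : l'.idxOf v < l.length := by
    rw [hl.length_eq, ← hl'.length_eq]
    exact List.idxOf_lt_length_iff.2 hv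
  exact ⟨_, getD_mem hx, idxOf_getD hl.nodup hx⟩

theorem reflTransGen_toggleStep_of_outputPositions_eq {n : ℕ} {l l' : List ℕ}
    (hl : IsPermList n l) (hl' : IsPermList n l') (hw : outputPositions l = outputPositions l') :
    Relation.ReflTransGen ToggleStep l l' := by
  suffices ∀ k ≤ n, ∀ l, IsPermList n l → outputPositions l = outputPositions l' →
      AgreeAbove k l l' → Relation.ReflTransGen ToggleStep l l' from
    this n le_rfl l hl hw (agreeAbove_of_isPermList hl hl')
  intro k
  induction k with
  | zero =>
    intro _ l hl hw hag
    rw [eq_of_agreeAbove_zero hl hl' hag]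
  | succ k ih =>
    intro hk l hl hw hag
    obtain ⟨j, hjl, hj⟩ := exists_idxOf_eq hl hl' (hl'.mem_iff.2 ⟨by omega, hk⟩)
    have hjk : j ≤ k + 1 := by
      by_contra hjk
      rw [hag j (by omega), List.idxOf_inj (hl'.mem_iff.2 (hl.mem_iff.1 hjl))] at hj
      omega
    exact reflTransGen_toggleStep_of_agreeAbove_succ hl' hk (ih (by omega)) hl hw hag hj
      (hl.mem_iff.1 hjl).1 hjk

/-- For any higher-order twisted stack-sorting operator `𝔰 = νₘ ∘ ⋯ ∘ ν₂ ∘ s`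
(each `νⱼ ∈ {s, rev}`), permutations with the same skeleton have the same number of
preimages under `𝔰`. -/
theorem higher_order_fertility_skeletal (n : ℕ) (π π' : List ℕ)
    (hπ : IsPermList n π) (hπ' : IsPermList n π') (hsk : skel π = skel π')
    (νs : List (List ℕ → List ℕ)) (hν : ∀ g ∈ νs, g = stackSort ∨ g = List.reverse) :
    Nat.card {σ : List ℕ // IsPermList n σ ∧ νs.foldr (· ∘ ·) stackSort σ = π} =
      Nat.card {σ : List ℕ // IsPermList n σ ∧ νs.foldr (· ∘ ·) stackSort σ = π'} := by
  have hF : ToggleCompatible (νs.foldr (· ∘ ·) stackSort) :=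
    toggleCompatible_foldr_comp toggleCompatible_stackSort fun g hg => by
      rcases hν g hg with rfl | rfl
      exacts [toggleCompatible_stackSort, toggleCompatible_reverse]
  exact card_preimage_eq_of_reflTransGen hF <| reflTransGen_toggleStep_of_outputPositions_eq hπ hπ'
    (outputPositions_eq_of_skel_eq hπ hπ' hsk)
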